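/- arXiv:2010.13029 — 3 statements merged into one kernel-verified Lean document; each statement's English description precedes it below -/
import Mathlib

section
/- Let d be a positive integer and let W be a real d×d matrix. Denote by W∘W the entrywise (Hadamard) square of W, and by exp the matrix exponential. Then the directed graph G(W) on vertices {1,…,d} having an edge from i to j if and only if W_{ij} ≠ 0 is acyclic (i.e., W is the weighted adjacency matrix of a DAG) if and only if Tr(exp(W∘W)) = d. -/
/-!
The matrix `A = W ⊙ W` is entrywise nonnegative with the same support as `W`, so `(A ^ k) i i > 0`
exactly when `G(W)` has a closed walk of length `k` through `i`. Hence `G(W)` is acyclic iff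
`Tr (A ^ k) = 0` for all `k ≥ 1`. Since `Tr (exp A) = d + ∑_{k ≥ 1} Tr (A ^ k) / k!` is a series
of nonnegative terms, this happens iff `Tr (exp A) = d`.
-/

open scoped Matrix

/-- The directed graph with edge relation `E` (on vertices `Fin d`) contains a directed cycle:
a nonempty sequence of vertices `v 0, v 1, …, v m` with `v m = v 0` and an edge from each
`v t` to `v (t+1)`. -/
def HasDirectedCycle {d : ℕ} (E : Fin d → Fin d → Prop) : Prop :=
  ∃ (m : ℕ) (v : ℕ → Fin d), 1 ≤ m ∧ v m = v 0 ∧ ∀ t < m, E (v t) (v (t + 1))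

open Finset

namespace Matrix

variable {n R : Type*} [Fintype n] [DecidableEq n]

section Walks

variable [Semiring R] [LinearOrder R] [IsStrictOrderedRing R] {A : Matrix n n R}

theorem trace_pow_nonneg (hA : ∀ i j, 0 ≤ A i j) (k : ℕ) : 0 ≤ (A ^ k).trace :=
  sum_nonneg fun i _ => pow_apply_nonneg hA k i i

theorem pow_apply_pos_iff_exists_walk (hA : ∀ i j, 0 ≤ A i j) (k : ℕ) (i j : n) :
    0 < (A ^ k) i j ↔
      ∃ v : ℕ → n, v 0 = i ∧ v k = j ∧ ∀ t < k, 0 < A (v t) (v (t + 1)) := by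
  induction k generalizing j with
  | zero =>
    constructor
    · intro h
      have hij : i = j := by by_contra hij; simp [one_apply_ne hij] at h
      exact ⟨fun _ => i, rfl, hij, by simp⟩
    · rintro ⟨v, rfl, rfl, -⟩
      simp
  | succ k ih =>
    have hterm : ∀ l ∈ univ, 0 ≤ (A ^ k) i l * A l j :=
      fun l _ => mul_nonneg (pow_apply_nonneg hA k i l) (hA l j)
    rw [pow_succ, mul_apply, sum_pos_iff_of_nonneg hterm]
    constructor
    · rintro ⟨l, -, hl⟩
      have hkl : 0 < (A ^ k) i l := pos_of_mul_pos_left hl (hA l j)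
      obtain ⟨v, hv0, hvk, hv⟩ := (ih l).1 hkl
      refine ⟨Function.update v (k + 1) j, by simpa using hv0, by simp, fun t ht => ?_⟩
      rcases Nat.lt_succ_iff_lt_or_eq.1 ht with ht | rfl
      · simpa [Function.update_apply, ht.ne, (Nat.lt_succ_of_lt ht).ne] using hv t ht
      · simpa [hvk] using pos_of_mul_pos_right hl (pow_apply_nonneg hA t i l)
    · rintro ⟨v, hv0, hvk, hv⟩
      have hk : 0 < (A ^ k) i (v k) :=
        (ih (v k)).2 ⟨v, hv0, rfl, fun t ht => hv t (ht.trans k.lt_succ_self)⟩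
      exact ⟨v k, mem_univ _, mul_pos hk (hvk ▸ hv k k.lt_succ_self)⟩

theorem hasDirectedCycle_iff_exists_trace_pow_ne_zero {d : ℕ} {A : Matrix (Fin d) (Fin d) R}
    (hA : ∀ i j, 0 ≤ A i j) :
    HasDirectedCycle (fun i j => 0 < A i j) ↔ ∃ k ≠ 0, (A ^ k).trace ≠ 0 := by
  have htrace : ∀ k, (A ^ k).trace ≠ 0 ↔ ∃ i, 0 < (A ^ k) i i := fun k => by
    rw [← LE.le.lt_iff_ne' (trace_pow_nonneg hA k), trace,
      sum_pos_iff_of_nonneg (f := (A ^ k).diag) fun i _ => pow_apply_nonneg hA k i i]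
    simp
  simp_rw [htrace, pow_apply_pos_iff_exists_walk hA]
  constructor
  · rintro ⟨m, v, hm, hvm, hv⟩
    exact ⟨m, by omega, v 0, v, rfl, hvm, hv⟩
  · rintro ⟨m, hm, -, v, rfl, hvm, hv⟩
    exact ⟨m, v, by omega, hvm, hv⟩

end Walks

theorem hasSum_trace_exp (A : Matrix n n ℝ) :
    HasSum (fun k => (k.factorial : ℝ)⁻¹ * (A ^ k).trace) (NormedSpace.exp A).trace := by
  -- `exp` does not depend on a norm; this one only serves to invoke the Banach-algebra lemma.
  let : NormedRing (Matrix n n ℝ) := Matrix.linftyOpNormedRing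
  let : NormedAlgebra ℝ (Matrix n n ℝ) := Matrix.linftyOpNormedAlgebra
  have hcont : Continuous (traceLinearMap n ℝ ℝ) := LinearMap.continuous_of_finiteDimensional _
  have h := (NormedSpace.exp_series_hasSum_exp' (𝕂 := ℝ) A).map
    (traceLinearMap n ℝ ℝ).toAddMonoidHom hcont
  simp only [LinearMap.toAddMonoidHom_coe, Function.comp_def, map_smul, traceLinearMap_apply,
    smul_eq_mul] at h
  exact h

theorem trace_exp_eq_card_iff {A : Matrix n n ℝ} (hA : ∀ i j, 0 ≤ A i j) :
    (NormedSpace.exp A).trace = Fintype.card n ↔ ∀ k ≠ 0, (A ^ k).trace = 0 := by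
  set f : ℕ → ℝ := fun k => (k.factorial : ℝ)⁻¹ * (A ^ k).trace
  have htail : HasSum (fun k => f (k + 1)) ((NormedSpace.exp A).trace - Fintype.card n) := by
    simpa [f] using (hasSum_nat_add_iff' 1).2 (hasSum_trace_exp A)
  have hf : ∀ k, 0 ≤ f (k + 1) := fun k => mul_nonneg (by positivity) (trace_pow_nonneg hA _)
  calc (NormedSpace.exp A).trace = Fintype.card n
      ↔ HasSum (fun k => f (k + 1)) 0 := by
        rw [← sub_eq_zero]
        exact ⟨fun h => h ▸ htail, htail.unique⟩
    _ ↔ ∀ k ≠ 0, (A ^ k).trace = 0 := by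
        rw [hasSum_zero_iff_of_nonneg hf, funext_iff, Nat.forall_ne_zero_iff]
        simp [f, Nat.factorial_ne_zero]

end Matrix

theorem dag_iff_trace_exp_hadamard_sq_eq_general (d : ℕ)
    (W : Matrix (Fin d) (Fin d) ℝ) :
    ¬ HasDirectedCycle (fun i j => W i j ≠ 0) ↔
      (NormedSpace.exp (W ⊙ W)).trace = (d : ℝ) := by
  have hA : ∀ i j, 0 ≤ (W ⊙ W) i j := fun i j => mul_self_nonneg (W i j)
  have hedge : (fun i j => W i j ≠ 0) = fun i j => 0 < (W ⊙ W) i j := by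
    ext i j
    exact mul_self_pos.symm
  have hexp := Matrix.trace_exp_eq_card_iff hA
  rw [Fintype.card_fin] at hexp
  rw [hexp, hedge, Matrix.hasDirectedCycle_iff_exists_trace_pow_ne_zero hA]
  simp only [not_exists, not_and, not_not]

/-- A real `d × d` matrix `W` is the weighted adjacency matrix of a DAG (i.e. the directed
graph with an edge `i → j` iff `W i j ≠ 0` is acyclic) if and only if
`Tr(exp (W ∘ W)) = d`, where `∘` is the Hadamard product. -/
theorem dag_iff_trace_exp_hadamard_sq_eq (d : ℕ) (hd : 0 < d)
    (W : Matrix (Fin d) (Fin d) ℝ) :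
    ¬ HasDirectedCycle (fun i j => W i j ≠ 0) ↔
      (NormedSpace.exp (W ⊙ W)).trace = (d : ℝ) :=
  dag_iff_trace_exp_hadamard_sq_eq_general d W
end

section
/- Let d be a positive integer and let A₀ be a real d×d matrix. The function A ↦ Tr(exp(A)) on real d×d matrices is Fréchet differentiable at A₀, with derivative the linear map H ↦ Tr(exp(A₀)·H). -/
/-!
Expand `τ (exp a) = ∑ τ (a ^ n) / n!` for a continuous linear map `τ` on a Banach algebra with
`τ (a * b) = τ (b * a)`. The derivative of `a ↦ a ^ (n + 1)` is `h ↦ ∑ᵢ x ^ (n - i) * h * x ^ i`,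
which `τ` collapses to `(n + 1) τ (x ^ n * h)`, so term by term the derivative of the series is
the exponential series of `h ↦ τ (x ^ n * h)`. These derivatives are bounded on balls by a
summable sequence, so the series may be differentiated termwise.
-/

attribute [local instance] Matrix.normedAddCommGroup Matrix.normedSpace

open NormedSpace ContinuousLinearMap Metric
open scoped Nat

variable {𝕂 𝔸 F : Type*} [RCLike 𝕂] [NormedRing 𝔸] [NormedAlgebra 𝕂 𝔸]
  [NormedAddCommGroup F] [NormedSpace 𝕂 F]

theorem norm_pow_mul_le (x y : 𝔸) (n : ℕ) : ‖x ^ n * y‖ ≤ ‖x‖ ^ n * ‖y‖ := by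
  induction n with
  | zero => simp
  | succ n ih =>
    calc ‖x ^ (n + 1) * y‖ = ‖x * (x ^ n * y)‖ := by rw [pow_succ', mul_assoc]
      _ ≤ ‖x‖ * (‖x‖ ^ n * ‖y‖) := norm_mul_le_of_le le_rfl ih
      _ = ‖x‖ ^ (n + 1) * ‖y‖ := by ring

theorem inv_factorial_succ_mul_succ {K : Type*} [Field K] [CharZero K] (n : ℕ) :
    ((n + 1)! : K)⁻¹ * (n + 1) = (n ! : K)⁻¹ := by
  rw [Nat.factorial_succ, Nat.cast_mul, mul_inv, mul_comm, ← mul_assoc, Nat.cast_succ,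
    mul_inv_cancel₀ (Nat.cast_add_one_ne_zero n), one_mul]

namespace ContinuousLinearMap

variable (τ : 𝔸 →L[𝕂] F)

theorem norm_comp_mul_pow_le (x : 𝔸) (n : ℕ) : ‖τ.comp (mul 𝕂 𝔸 (x ^ n))‖ ≤ ‖τ‖ * ‖x‖ ^ n :=
  opNorm_le_bound _ (by positivity) fun h => by
    calc ‖τ (x ^ n * h)‖ ≤ ‖τ‖ * ‖x ^ n * h‖ := τ.le_opNorm _
      _ ≤ ‖τ‖ * (‖x‖ ^ n * ‖h‖) := by gcongr; exact norm_pow_mul_le x h n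
      _ = ‖τ‖ * ‖x‖ ^ n * ‖h‖ := by ring

theorem norm_inv_factorial_smul_comp_mul_pow_le {x : 𝔸} {R : ℝ} (hx : ‖x‖ ≤ R) (n : ℕ) :
    ‖(n ! : 𝕂)⁻¹ • τ.comp (mul 𝕂 𝔸 (x ^ n))‖ ≤ ‖τ‖ * (R ^ n / n !) :=
  calc ‖(n ! : 𝕂)⁻¹ • τ.comp (mul 𝕂 𝔸 (x ^ n))‖
      = (n ! : ℝ)⁻¹ * ‖τ.comp (mul 𝕂 𝔸 (x ^ n))‖ := by
        rw [norm_smul, norm_inv, RCLike.norm_natCast]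
    _ ≤ (n ! : ℝ)⁻¹ * (‖τ‖ * R ^ n) := by
        gcongr; exact (τ.norm_comp_mul_pow_le x n).trans (by gcongr)
    _ = ‖τ‖ * (R ^ n / n !) := by ring

theorem map_exp_eq_add_tsum [CompleteSpace 𝔸] (a : 𝔸) :
    τ (exp a) = τ 1 + ∑' n, ((n + 1)! : 𝕂)⁻¹ • τ (a ^ (n + 1)) := by
  have h := (hasSum_nat_add_iff' 1).mpr ((exp_series_hasSum_exp' (𝕂 := 𝕂) a).mapL τ)
  simp only [map_smul, Finset.range_one, Finset.sum_singleton, Nat.factorial_zero,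
    Nat.cast_one, inv_one, pow_zero, one_smul] at h
  rw [h.tsum_eq, add_sub_cancel]

theorem tsum_inv_factorial_smul_comp_mul_pow [CompleteSpace 𝔸] (x : 𝔸) :
    ∑' n, (n ! : 𝕂)⁻¹ • τ.comp (mul 𝕂 𝔸 (x ^ n)) = τ.comp (mul 𝕂 𝔸 (exp x)) := by
  have h := (exp_series_hasSum_exp' (𝕂 := 𝕂) x).mapL ((compL 𝕂 𝔸 𝔸 F τ).comp (mul 𝕂 𝔸))
  simpa only [map_smul, coe_comp, Function.comp_apply, compL_apply] using h.tsum_eq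

variable {τ}

open scoped RightActions in
theorem hasFDerivAt_comp_pow_succ (hτ : ∀ a b, τ (a * b) = τ (b * a)) (n : ℕ) (x : 𝔸) :
    HasFDerivAt (fun a => τ (a ^ (n + 1))) ((n + 1 : 𝕂) • τ.comp (mul 𝕂 𝔸 (x ^ n))) x := by
  refine (τ.hasFDerivAt.comp x (hasFDerivAt_pow' (n + 1))).congr_fderiv (ext fun h => ?_)
  have hcyc : ∀ i ∈ Finset.range (n + 1), τ (x ^ (n - i) * h * x ^ i) = τ (x ^ n * h) := by
    intro i hi
    rw [hτ, ← mul_assoc, ← pow_add, Nat.add_sub_cancel' (Finset.mem_range_succ_iff.mp hi)]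
  simp [map_sum, Finset.sum_congr rfl hcyc, ← Nat.cast_smul_eq_nsmul 𝕂]

theorem hasFDerivAt_inv_factorial_smul_comp_pow_succ (hτ : ∀ a b, τ (a * b) = τ (b * a))
    (n : ℕ) (x : 𝔸) :
    HasFDerivAt (fun a => ((n + 1)! : 𝕂)⁻¹ • τ (a ^ (n + 1)))
      ((n ! : 𝕂)⁻¹ • τ.comp (mul 𝕂 𝔸 (x ^ n))) x := by
  simpa only [smul_smul, inv_factorial_succ_mul_succ] using
    (hasFDerivAt_comp_pow_succ hτ n x).fun_const_smul ((n + 1)! : 𝕂)⁻¹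

theorem hasFDerivAt_comp_exp [CompleteSpace 𝔸] [CompleteSpace F]
    (hτ : ∀ a b, τ (a * b) = τ (b * a)) (x : 𝔸) :
    HasFDerivAt (fun a => τ (exp a)) (τ.comp (mul 𝕂 𝔸 (exp x))) x := by
  have hsum := hasFDerivAt_tsum_of_isPreconnected
    ((Real.summable_pow_div_factorial (‖x‖ + 1)).mul_left ‖τ‖) isOpen_ball
    (let _ : NormedSpace ℝ 𝔸 := .restrictScalars ℝ 𝕂 𝔸; isPreconnected_ball)
    (fun n y _ => hasFDerivAt_inv_factorial_smul_comp_pow_succ hτ n y)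
    (fun n y hy => τ.norm_inv_factorial_smul_comp_mul_pow_le (mem_ball_zero_iff.mp hy).le n)
    (mem_ball_self (by positivity)) (by simp) (mem_ball_zero_iff.mpr (lt_add_one ‖x‖))
  rw [tsum_inv_factorial_smul_comp_mul_pow] at hsum
  simpa only [← map_exp_eq_add_tsum] using hsum.const_add (τ 1)

end ContinuousLinearMap

theorem hasFDerivAt_trace_exp_general (d : ℕ) (A₀ : Matrix (Fin d) (Fin d) ℝ) :
    HasFDerivAt (fun A : Matrix (Fin d) (Fin d) ℝ => (NormedSpace.exp A).trace)
      (LinearMap.toContinuousLinearMap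
        ((Matrix.traceLinearMap (Fin d) ℝ ℝ).comp
          (LinearMap.mulLeft ℝ (NormedSpace.exp A₀)))) A₀ := by
  -- `HasFDerivAt` only sees the topology, which the operator norm shares with the sup norm;
  -- unlike the sup norm, it makes the matrices a normed algebra.
  let _ : NormedRing (Matrix (Fin d) (Fin d) ℝ) := Matrix.linftyOpNormedRing
  let _ : NormedAlgebra ℝ (Matrix (Fin d) (Fin d) ℝ) := Matrix.linftyOpNormedAlgebra
  have : @CompleteSpace (Matrix (Fin d) (Fin d) ℝ) PseudoMetricSpace.toUniformSpace :=
    FiniteDimensional.complete ℝ _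
  exact (LinearMap.toContinuousLinearMap (Matrix.traceLinearMap (Fin d) ℝ ℝ)).hasFDerivAt_comp_exp
    Matrix.trace_mul_comm A₀

/-- The function `A ↦ Tr(exp A)` on real `d × d` matrices is Fréchet differentiable at any
matrix `A₀`, with derivative the (continuous) linear map `H ↦ Tr(exp A₀ * H)`. -/
theorem hasFDerivAt_trace_exp (d : ℕ) (hd : 0 < d) (A₀ : Matrix (Fin d) (Fin d) ℝ) :
    HasFDerivAt (fun A : Matrix (Fin d) (Fin d) ℝ => (NormedSpace.exp A).trace)
      (LinearMap.toContinuousLinearMap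
        ((Matrix.traceLinearMap (Fin d) ℝ ℝ).comp
          (LinearMap.mulLeft ℝ (NormedSpace.exp A₀)))) A₀ :=
  hasFDerivAt_trace_exp_general d A₀
end

section
/- Let d be a positive integer and define h : ℝ^{d×d} → ℝ by h(W) = Tr(exp(W∘W)) − d, where W∘W is the Hadamard square of W. Then h is Fréchet differentiable at every W, and its derivative at W is the linear map V ↦ Tr(G(W)ᵀ · V) where G(W) = 2 (exp(W∘W))ᵀ ∘ W; equivalently, the gradient of h with respect to the Frobenius inner product ⟨A,B⟩ = Tr(AᵀB) is ∇h(W) = 2 (exp(W∘W))ᵀ ∘ W. -/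
/-!
For a continuous linear functional `τ` on a Banach algebra with `τ (a * b) = τ (b * a)`, the
derivative of `x ↦ τ (x ^ (n + 1))` is `h ↦ ∑ τ (x ^ (n - i) * h * x ^ i)`, and cyclicity collapses
each summand to `τ (x ^ n * h)`. Differentiating the exponential series termwise (the derivatives
are dominated by `‖τ‖ R ^ n / n!` on the ball of radius `R`) gives `D(τ ∘ exp)(x) h = τ (exp x * h)`.
For matrices, `τ = trace`. The Hadamard square has derivative `V ↦ 2 W ⊙ V`, and
`Tr (E (W ⊙ V)) = Tr ((Eᵀ ⊙ W)ᵀ V)` moves the Hadamard factor to the other side of the pairing.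
-/

open scoped Matrix

attribute [local instance] Matrix.normedAddCommGroup Matrix.normedSpace

section Tracial

open NormedSpace ContinuousLinearMap
open scoped Nat

variable {𝕂 𝔸 F : Type*} [RCLike 𝕂] [NormedRing 𝔸] [NormedAlgebra 𝕂 𝔸]
  [NormedAddCommGroup F] [NormedSpace 𝕂 F]

theorem ContinuousLinearMap.norm_comp_mul_pow_le_s8 (τ : 𝔸 →L[𝕂] F) (x : 𝔸) (n : ℕ) :
    ‖τ.comp (mul 𝕂 𝔸 (x ^ n))‖ ≤ ‖τ‖ * ‖x‖ ^ n := by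
  cases n with
  | zero =>
    have hτ : τ.comp (mul 𝕂 𝔸 1) = τ := by ext; simp
    simp [hτ]
  | succ n =>
    calc ‖τ.comp (mul 𝕂 𝔸 (x ^ (n + 1)))‖ ≤ ‖τ‖ * ‖x ^ (n + 1)‖ :=
          (opNorm_comp_le _ _).trans (by gcongr; exact opNorm_mul_apply_le _ _ _)
      _ ≤ ‖τ‖ * ‖x‖ ^ (n + 1) := by gcongr; exact norm_pow_le' x n.succ_pos

theorem ContinuousLinearMap.hasFDerivAt_comp_pow_succ_of_map_mul_comm (τ : 𝔸 →L[𝕂] F)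
    (hτ : ∀ a b, τ (a * b) = τ (b * a)) (n : ℕ) (x : 𝔸) :
    HasFDerivAt (fun y => τ (y ^ (n + 1))) ((n + 1 : 𝕂) • τ.comp (mul 𝕂 𝔸 (x ^ n))) x := by
  refine (τ.hasFDerivAt.comp x (hasFDerivAt_pow' (n + 1))).congr_fderiv ?_
  ext h
  have hterm : ∀ i ∈ Finset.range (n + 1), τ (x ^ (n - i) * h * x ^ i) = τ (x ^ n * h) := by
    intro i hi
    rw [hτ, ← mul_assoc, ← pow_add, Nat.add_sub_cancel' (Finset.mem_range_succ_iff.mp hi)]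
  simp [Finset.sum_congr rfl hterm, ← Nat.cast_smul_eq_nsmul 𝕂]

theorem ContinuousLinearMap.hasFDerivAt_inv_factorial_smul_comp_pow_succ_s8 (τ : 𝔸 →L[𝕂] F)
    (hτ : ∀ a b, τ (a * b) = τ (b * a)) (n : ℕ) (x : 𝔸) :
    HasFDerivAt (fun y => (((n + 1)! : 𝕂)⁻¹) • τ (y ^ (n + 1)))
      (((n ! : 𝕂)⁻¹) • τ.comp (mul 𝕂 𝔸 (x ^ n))) x := by
  refine ((τ.hasFDerivAt_comp_pow_succ_of_map_mul_comm hτ n x).const_smul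
    (((n + 1)! : 𝕂)⁻¹)).congr_fderiv ?_
  rw [smul_smul, Nat.factorial_succ, Nat.cast_mul, mul_inv, mul_comm, ← mul_assoc,
    Nat.cast_succ, mul_inv_cancel₀ (Nat.cast_add_one_ne_zero n), one_mul]

variable [CompleteSpace 𝔸]

theorem ContinuousLinearMap.hasSum_comp_exp_sub_one (τ : 𝔸 →L[𝕂] F) (x : 𝔸) :
    HasSum (fun n : ℕ => (((n + 1)! : 𝕂)⁻¹) • τ (x ^ (n + 1))) (τ (exp x) - τ 1) := by
  have h := (exp_series_hasSum_exp' (𝕂 := 𝕂) x).mapL τ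
  rw [← hasSum_nat_add_iff' 1] at h
  simpa using h

theorem ContinuousLinearMap.hasSum_comp_mul_exp (τ : 𝔸 →L[𝕂] F) (x : 𝔸) :
    HasSum (fun n : ℕ => ((n ! : 𝕂)⁻¹) • τ.comp (mul 𝕂 𝔸 (x ^ n)))
      (τ.comp (mul 𝕂 𝔸 (exp x))) := by
  simpa using (exp_series_hasSum_exp' (𝕂 := 𝕂) x).mapL (compL 𝕂 𝔸 𝔸 F τ ∘L mul 𝕂 𝔸)

theorem ContinuousLinearMap.hasFDerivAt_comp_exp_of_map_mul_comm [CompleteSpace F]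
    (τ : 𝔸 →L[𝕂] F) (hτ : ∀ a b, τ (a * b) = τ (b * a)) (x : 𝔸) :
    HasFDerivAt (fun y => τ (exp y)) (τ.comp (mul 𝕂 𝔸 (exp x))) x := by
  let := NormedSpace.restrictScalars ℝ 𝕂 𝔸
  set R := ‖x‖ + 1
  have hu : Summable fun n : ℕ => ‖τ‖ * (R ^ n / n !) :=
    (Real.summable_pow_div_factorial R).mul_left _
  have hbound : ∀ (n : ℕ) y, y ∈ Metric.ball (0 : 𝔸) R →
      ‖((n ! : 𝕂)⁻¹) • τ.comp (mul 𝕂 𝔸 (y ^ n))‖ ≤ ‖τ‖ * (R ^ n / n !) := by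
    intro n y hy
    have hyR : ‖y‖ ≤ R := (mem_ball_zero_iff.mp hy).le
    calc ‖((n ! : 𝕂)⁻¹) • τ.comp (mul 𝕂 𝔸 (y ^ n))‖
        = (n ! : ℝ)⁻¹ * ‖τ.comp (mul 𝕂 𝔸 (y ^ n))‖ := by
          rw [norm_smul, norm_inv, RCLike.norm_natCast]
      _ ≤ (n ! : ℝ)⁻¹ * (‖τ‖ * R ^ n) := by
          gcongr
          exact (τ.norm_comp_mul_pow_le_s8 y n).trans (by gcongr)
      _ = ‖τ‖ * (R ^ n / n !) := by ring
  have hx : x ∈ Metric.ball (0 : 𝔸) R := by simp [R]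
  have hseries := hasFDerivAt_tsum_of_isPreconnected hu Metric.isOpen_ball
    (convex_ball (0 : 𝔸) R).isPreconnected
    (fun n y _ => τ.hasFDerivAt_inv_factorial_smul_comp_pow_succ_s8 hτ n y) hbound
    (Metric.mem_ball_self (by positivity)) (by simp) hx
  rw [(τ.hasSum_comp_mul_exp x).tsum_eq] at hseries
  have hfun : (fun y => τ (exp y))
      = fun y => τ 1 + ∑' n : ℕ, (((n + 1)! : 𝕂)⁻¹) • τ (y ^ (n + 1)) := by
    funext y
    rw [(τ.hasSum_comp_exp_sub_one y).tsum_eq]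
    abel
  rw [hfun]
  exact hseries.const_add (τ 1)

end Tracial

namespace Matrix

open NormedSpace

theorem hasFDerivAt_trace_exp {𝕂 n : Type*} [RCLike 𝕂] [Fintype n] [DecidableEq n]
    (A : Matrix n n 𝕂) :
    HasFDerivAt (fun A : Matrix n n 𝕂 => (exp A).trace)
      (LinearMap.toContinuousLinearMap
        ((traceLinearMap n 𝕂 𝕂).comp (LinearMap.mulLeft 𝕂 (exp A)))) A := by
  -- The sup norm is not submultiplicative; the ℓ∞-operator norm is, and its topology is
  -- definitionally that of the sup norm. Completeness must be supplied for its uniformity.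
  let : NormedRing (Matrix n n 𝕂) := Matrix.linftyOpNormedRing
  let : NormedAlgebra 𝕂 (Matrix n n 𝕂) := Matrix.linftyOpNormedAlgebra
  exact @ContinuousLinearMap.hasFDerivAt_comp_exp_of_map_mul_comm _ _ _ _ _ _ _ _
    (FiniteDimensional.complete 𝕂 _) _ (LinearMap.toContinuousLinearMap (traceLinearMap n 𝕂 𝕂))
    (fun a b => trace_mul_comm a b) A

-- `⊙` is the multiplication of the commutative ring `m → n → α`, whose norm is the sup norm.
theorem hasFDerivAt_hadamard_self {𝕜 m n α : Type*} [NontriviallyNormedField 𝕜] [Fintype m]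
    [Fintype n] [NormedCommRing α] [NormedAlgebra 𝕜 α] (W : Matrix m n α) :
    HasFDerivAt (fun V : Matrix m n α => V ⊙ V)
      ((2 : 𝕜) • ContinuousLinearMap.mul 𝕜 (m → n → α) W) W := by
  have hid := hasFDerivAt_id (𝕜 := 𝕜) (E := m → n → α) W
  refine (hid.mul hid).congr_fderiv ?_
  ext V i j
  rw [two_smul]
  rfl

theorem trace_mul_hadamard {m n α : Type*} [Fintype m] [Fintype n] [CommSemiring α]
    (A : Matrix m n α) (B C : Matrix n m α) :
    (A * (B ⊙ C)).trace = ((Aᵀ ⊙ B)ᵀ * C).trace := by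
  simp [trace, mul_apply, mul_assoc]

end Matrix

theorem hasFDerivAt_trace_exp_hadamard_sq_general (d : ℕ)
    (W : Matrix (Fin d) (Fin d) ℝ) :
    HasFDerivAt
      (fun W : Matrix (Fin d) (Fin d) ℝ =>
        (NormedSpace.exp (W ⊙ W)).trace - (d : ℝ))
      (LinearMap.toContinuousLinearMap
        ((Matrix.traceLinearMap (Fin d) ℝ ℝ).comp
          (LinearMap.mulLeft ℝ ((2 : ℝ) • ((NormedSpace.exp (W ⊙ W))ᵀ ⊙ W))ᵀ))) W := by
  refine (((Matrix.hasFDerivAt_trace_exp (W ⊙ W)).comp (f := fun V => V ⊙ V) W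
    (Matrix.hasFDerivAt_hadamard_self (𝕜 := ℝ) W)).sub_const (d : ℝ)).congr_fderiv ?_
  ext V
  change (NormedSpace.exp (W ⊙ W) * ((2 : ℝ) • (W ⊙ V))).trace
    = (((2 : ℝ) • ((NormedSpace.exp (W ⊙ W))ᵀ ⊙ W))ᵀ * V).trace
  rw [Matrix.mul_smul, Matrix.trace_smul, Matrix.trace_mul_hadamard, Matrix.transpose_smul,
    Matrix.smul_mul, Matrix.trace_smul]

/-- The function `h(W) = Tr(exp (W ∘ W)) − d` on real `d × d` matrices (with `∘` the Hadamard
product) is Fréchet differentiable at every `W`, with derivative the (continuous) linear map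
`V ↦ Tr(G(W)ᵀ * V)`, where `G(W) = 2 (exp (W ∘ W))ᵀ ∘ W`; equivalently, the gradient of `h`
with respect to the Frobenius inner product `⟨A, B⟩ = Tr(Aᵀ * B)` is
`∇h(W) = 2 (exp (W ∘ W))ᵀ ∘ W`. -/
theorem hasFDerivAt_trace_exp_hadamard_sq (d : ℕ) (hd : 0 < d)
    (W : Matrix (Fin d) (Fin d) ℝ) :
    HasFDerivAt
      (fun W : Matrix (Fin d) (Fin d) ℝ =>
        (NormedSpace.exp (W ⊙ W)).trace - (d : ℝ))
      (LinearMap.toContinuousLinearMap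
        ((Matrix.traceLinearMap (Fin d) ℝ ℝ).comp
          (LinearMap.mulLeft ℝ ((2 : ℝ) • ((NormedSpace.exp (W ⊙ W))ᵀ ⊙ W))ᵀ))) W :=
  hasFDerivAt_trace_exp_hadamard_sq_general d W
end
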